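/- arXiv:1909.13290 — 7 statements merged into one kernel-verified Lean document; each statement's English description precedes it below -/
import Mathlib

section
/- For every real number p > 1, the family (λ_σ^{-p})_{σ ∈ Γ} is summable, and its sum satisfies ∑_{σ ∈ Γ} λ_σ^{-p} ≤ exp(∑_{k=1}^{∞} k^{-p}) < ∞. -/
/-!
Expanding `∏_{k ∈ T} (1 + f k)` gives `∑_{σ ⊆ T} ∏_{k ∈ σ} f k`, and `1 + x ≤ eˣ` bounds the
product by `exp (∑_{k ∈ T} f k)`. Every finite family of finite sets lies in the powerset of
its union, so the partial sums of `σ ↦ ∏_{k ∈ σ} f k` are bounded by `exp (∑' k, f k)`; for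
`f k = (k + 1)^{-p}` this product is `λ_σ^{-p}`.
-/

open scoped BigOperators

/-- `λ_σ = ∏_{k ∈ σ} (k+1)`, with `λ_∅ = 1`. -/
noncomputable def lam (σ : Finset ℕ) : ℝ := ∏ k ∈ σ, ((k : ℝ) + 1)

section FinsetProd

open Finset

variable {ι : Type*} {f : ι → ℝ}

theorem Finset.sum_powerset_prod_le_exp_sum (hf : ∀ i, 0 ≤ f i) (T : Finset ι) :
    ∑ σ ∈ T.powerset, ∏ i ∈ σ, f i ≤ Real.exp (∑ i ∈ T, f i) := by
  rw [← prod_add_one, Real.exp_sum]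
  exact prod_le_prod (fun i _ => by linarith [hf i]) fun i _ => Real.add_one_le_exp (f i)

theorem sum_finset_prod_le_exp_tsum (hf : ∀ i, 0 ≤ f i) (hs : Summable f)
    (S : Finset (Finset ι)) : ∑ σ ∈ S, ∏ i ∈ σ, f i ≤ Real.exp (∑' i, f i) := by
  classical
  have hS : S ⊆ (S.sup id).powerset := fun σ hσ => mem_powerset.2 (le_sup (f := id) hσ)
  calc ∑ σ ∈ S, ∏ i ∈ σ, f i
      ≤ ∑ σ ∈ (S.sup id).powerset, ∏ i ∈ σ, f i :=
        sum_le_sum_of_subset_of_nonneg hS fun σ _ _ => prod_nonneg fun i _ => hf i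
    _ ≤ Real.exp (∑ i ∈ S.sup id, f i) := sum_powerset_prod_le_exp_sum hf _
    _ ≤ Real.exp (∑' i, f i) := Real.exp_le_exp.2 (hs.sum_le_tsum _ fun i _ => hf i)

theorem summable_finset_prod_of_nonneg (hf : ∀ i, 0 ≤ f i) (hs : Summable f) :
    Summable fun σ : Finset ι => ∏ i ∈ σ, f i :=
  summable_of_sum_le (fun _ => prod_nonneg fun i _ => hf i) (sum_finset_prod_le_exp_tsum hf hs)

theorem tsum_finset_prod_le_exp_tsum (hf : ∀ i, 0 ≤ f i) (hs : Summable f) :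
    ∑' σ : Finset ι, ∏ i ∈ σ, f i ≤ Real.exp (∑' i, f i) :=
  Real.tsum_le_of_sum_le (fun _ => prod_nonneg fun i _ => hf i) (sum_finset_prod_le_exp_tsum hf hs)

end FinsetProd

theorem lam_rpow (σ : Finset ℕ) (s : ℝ) : lam σ ^ s = ∏ k ∈ σ, ((k : ℝ) + 1) ^ s :=
  (Real.finsetProd_rpow σ _ (fun _ _ => by positivity) s).symm

theorem summable_nat_add_one_rpow_neg {p : ℝ} (hp : 1 < p) :
    Summable fun k : ℕ => ((k : ℝ) + 1) ^ (-p) := by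
  have h := (summable_nat_add_iff 1).2 (Real.summable_nat_rpow.2 (by linarith : -p < -1))
  simpa using h

/-- For every real `p > 1`, the family `(λ_σ^{-p})_{σ ∈ Γ}` is summable and
`∑_{σ ∈ Γ} λ_σ^{-p} ≤ exp (∑_{k=1}^∞ k^{-p})`. -/
theorem stmt0 (p : ℝ) (hp : 1 < p) :
    Summable (fun σ : Finset ℕ => lam σ ^ (-p)) ∧
    ∑' σ : Finset ℕ, lam σ ^ (-p) ≤ Real.exp (∑' k : ℕ, ((k : ℝ) + 1) ^ (-p)) := by
  have hf : ∀ k : ℕ, 0 ≤ ((k : ℝ) + 1) ^ (-p) := fun k => by positivity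
  simp only [lam_rpow]
  exact ⟨summable_finset_prod_of_nonneg hf (summable_nat_add_one_rpow_neg hp),
    tsum_finset_prod_le_exp_tsum hf (summable_nat_add_one_rpow_neg hp)⟩
end

section
/- Let p ≥ 0 be a real number and F : Γ → ℂ. The following are equivalent: (i) there exists M ≥ 0 such that |∑_{σ ∈ Γ} F(σ)·ξ(σ)| ≤ M·(∑_{σ ∈ Γ} λ_σ^{2p} |ξ(σ)|²)^{1/2} for every finitely supported function ξ : Γ → ℂ; (ii) ∑_{σ ∈ Γ} λ_σ^{-2p} |F(σ)|² < ∞. Moreover, in that case the least such constant M satisfies M² = ∑_{σ ∈ Γ} λ_σ^{-2p} |F(σ)|². -/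
/-!
Weighted Cauchy–Schwarz, `|∑ F ξ| ≤ (∑ w⁻¹ |F|²)^{1/2} (∑ w |ξ|²)^{1/2}`, shows that
`(∑ w⁻¹ |F|²)^{1/2}` is an admissible constant whenever the series converges. Conversely,
testing a bound `M` against `ξ = w⁻¹ F̄` restricted to a finite set `s` gives
`∑_{σ ∈ s} w⁻¹ |F|² ≤ M²`, so the partial sums are bounded by `M²`; this yields both
summability and the minimality of `(∑ w⁻¹ |F|²)^{1/2}`. The theorem is the case `w = λ^{2p}`.
-/

open Finset

lemma lam_pos (σ : Finset ℕ) : 0 < lam σ :=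
  prod_pos fun _ _ => by positivity

section WeightedDuality

variable {ι 𝕜 : Type*} [RCLike 𝕜] {w : ι → ℝ}

def dualBoundSet (w : ι → ℝ) (F : ι → 𝕜) : Set ℝ :=
  {M | 0 ≤ M ∧ ∀ ξ : ι →₀ 𝕜,
    ‖∑ σ ∈ ξ.support, F σ * ξ σ‖ ≤ M * √(∑ σ ∈ ξ.support, w σ * ‖ξ σ‖ ^ 2)}

lemma norm_sum_mul_le_sqrt_mul_sqrt (hw : ∀ σ, 0 < w σ) (F ξ : ι → 𝕜) (s : Finset ι) :
    ‖∑ σ ∈ s, F σ * ξ σ‖ ≤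
      √(∑ σ ∈ s, (w σ)⁻¹ * ‖F σ‖ ^ 2) * √(∑ σ ∈ s, w σ * ‖ξ σ‖ ^ 2) := by
  have hterm : ∀ σ, ‖F σ * ξ σ‖ = √((w σ)⁻¹ * ‖F σ‖ ^ 2) * √(w σ * ‖ξ σ‖ ^ 2) := by
    intro σ
    rw [← Real.sqrt_mul (by have := hw σ; positivity), norm_mul]
    rw [show (w σ)⁻¹ * ‖F σ‖ ^ 2 * (w σ * ‖ξ σ‖ ^ 2) = (‖F σ‖ * ‖ξ σ‖) ^ 2 by
      field_simp [(hw σ).ne']]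
    exact (Real.sqrt_sq (by positivity)).symm
  calc ‖∑ σ ∈ s, F σ * ξ σ‖ ≤ ∑ σ ∈ s, ‖F σ * ξ σ‖ := norm_sum_le _ _
    _ = ∑ σ ∈ s, √((w σ)⁻¹ * ‖F σ‖ ^ 2) * √(w σ * ‖ξ σ‖ ^ 2) := sum_congr rfl fun σ _ => hterm σ
    _ ≤ _ := Real.sum_sqrt_mul_sqrt_le s (fun σ => by have := hw σ; positivity)
      (fun σ => by have := hw σ; positivity)

lemma sqrt_le_of_le_mul_sqrt {S M : ℝ} (hS : 0 ≤ S) (hM : 0 ≤ M) (h : S ≤ M * √S) : √S ≤ M := by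
  rcases (Real.sqrt_nonneg S).eq_or_lt with h0 | hpos
  · rw [← h0]; exact hM
  · have h' : √S * √S ≤ M * √S := by rwa [Real.mul_self_sqrt hS]
    exact le_of_mul_le_mul_right h' hpos

lemma sum_le_sq_of_mem_dualBoundSet (hw : ∀ σ, 0 < w σ) {F : ι → 𝕜} {M : ℝ}
    (hM : M ∈ dualBoundSet w F) (s : Finset ι) :
    ∑ σ ∈ s, (w σ)⁻¹ * ‖F σ‖ ^ 2 ≤ M ^ 2 := by
  classical
  set S := ∑ σ ∈ s, (w σ)⁻¹ * ‖F σ‖ ^ 2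
  have hS : 0 ≤ S := sum_nonneg fun σ _ => by have := hw σ; positivity
  let ξ : ι →₀ 𝕜 := Finsupp.indicator s fun σ _ => star (F σ) * ((w σ)⁻¹ : ℝ)
  have hξ : ∀ σ ∈ s, ξ σ = star (F σ) * ((w σ)⁻¹ : ℝ) := fun σ hσ =>
    Finsupp.indicator_of_mem hσ _
  have hsupp : ξ.support ⊆ s := Finsupp.support_indicator_subset _ _
  have hpair : ∑ σ ∈ ξ.support, F σ * ξ σ = (S : 𝕜) := by
    rw [sum_subset hsupp fun σ _ h => by rw [Finsupp.notMem_support_iff.mp h, mul_zero]]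
    push_cast [S]
    refine sum_congr rfl fun σ hσ => ?_
    rw [hξ σ hσ, ← mul_assoc, RCLike.star_def, RCLike.mul_conj]
    push_cast; ring
  have hnorm : ∑ σ ∈ ξ.support, w σ * ‖ξ σ‖ ^ 2 = S := by
    rw [sum_subset hsupp fun σ _ h => by simp [Finsupp.notMem_support_iff.mp h]]
    refine sum_congr rfl fun σ hσ => ?_
    rw [hξ σ hσ, norm_mul, RCLike.star_def, RCLike.norm_conj, RCLike.norm_ofReal,
      abs_of_pos (inv_pos.mpr (hw σ))]
    field_simp [(hw σ).ne']
  have h := hM.2 ξ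
  rw [hpair, hnorm, RCLike.norm_ofReal, abs_of_nonneg hS] at h
  exact (Real.sqrt_le_iff.mp (sqrt_le_of_le_mul_sqrt hS hM.1 h)).2

lemma sqrt_tsum_mem_dualBoundSet (hw : ∀ σ, 0 < w σ) {F : ι → 𝕜}
    (hF : Summable fun σ => (w σ)⁻¹ * ‖F σ‖ ^ 2) :
    √(∑' σ, (w σ)⁻¹ * ‖F σ‖ ^ 2) ∈ dualBoundSet w F := by
  refine ⟨Real.sqrt_nonneg _, fun ξ => ?_⟩
  refine (norm_sum_mul_le_sqrt_mul_sqrt hw F ξ ξ.support).trans ?_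
  gcongr
  exact hF.sum_le_tsum _ fun σ _ => by have := hw σ; positivity

theorem dualBoundSet_nonempty_iff_and_isLeast (hw : ∀ σ, 0 < w σ) (F : ι → 𝕜) :
    ((dualBoundSet w F).Nonempty ↔ Summable fun σ => (w σ)⁻¹ * ‖F σ‖ ^ 2) ∧
      (Summable (fun σ => (w σ)⁻¹ * ‖F σ‖ ^ 2) →
        IsLeast (dualBoundSet w F) √(∑' σ, (w σ)⁻¹ * ‖F σ‖ ^ 2)) := by
  have hnonneg : ∀ σ, 0 ≤ (w σ)⁻¹ * ‖F σ‖ ^ 2 := fun σ => by have := hw σ; positivity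
  refine ⟨⟨fun ⟨M, hM⟩ => ?_, fun hF => ⟨_, sqrt_tsum_mem_dualBoundSet hw hF⟩⟩,
    fun hF => ⟨sqrt_tsum_mem_dualBoundSet hw hF, fun M hM => ?_⟩⟩
  · exact summable_of_sum_le hnonneg (sum_le_sq_of_mem_dualBoundSet hw hM)
  · exact Real.sqrt_le_iff.mpr ⟨hM.1, hF.tsum_le_of_sum_le (sum_le_sq_of_mem_dualBoundSet hw hM)⟩

end WeightedDuality

theorem stmt2_general (p : ℝ) (F : Finset ℕ → ℂ) :
    ((∃ M : ℝ, 0 ≤ M ∧ ∀ ξ : Finset ℕ →₀ ℂ,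
        ‖∑ σ ∈ ξ.support, F σ * ξ σ‖
          ≤ M * Real.sqrt (∑ σ ∈ ξ.support, lam σ ^ (2 * p) * ‖ξ σ‖ ^ 2)) ↔
      Summable (fun σ : Finset ℕ => lam σ ^ (-(2 * p)) * ‖F σ‖ ^ 2)) ∧
    (Summable (fun σ : Finset ℕ => lam σ ^ (-(2 * p)) * ‖F σ‖ ^ 2) →
      IsLeast {M : ℝ | 0 ≤ M ∧ ∀ ξ : Finset ℕ →₀ ℂ,
          ‖∑ σ ∈ ξ.support, F σ * ξ σ‖
            ≤ M * Real.sqrt (∑ σ ∈ ξ.support, lam σ ^ (2 * p) * ‖ξ σ‖ ^ 2)}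
        (Real.sqrt (∑' σ : Finset ℕ, lam σ ^ (-(2 * p)) * ‖F σ‖ ^ 2))) := by
  simp_rw [Real.rpow_neg (lam_pos _).le]
  exact dualBoundSet_nonempty_iff_and_isLeast (fun σ => Real.rpow_pos_of_pos (lam_pos σ) _) F

/-- Regularity criterion: a function `F : Γ → ℂ` defines a bounded linear functional
on finitely supported `ξ` (with the `‖·‖_p` norm) iff `∑_σ λ_σ^{-2p} |F(σ)|² < ∞`;
and then the least such bound `M` is `(∑_σ λ_σ^{-2p} |F(σ)|²)^{1/2}`. -/
theorem stmt2 (p : ℝ) (hp : 0 ≤ p) (F : Finset ℕ → ℂ) :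
    ((∃ M : ℝ, 0 ≤ M ∧ ∀ ξ : Finset ℕ →₀ ℂ,
        ‖∑ σ ∈ ξ.support, F σ * ξ σ‖
          ≤ M * Real.sqrt (∑ σ ∈ ξ.support, lam σ ^ (2 * p) * ‖ξ σ‖ ^ 2)) ↔
      Summable (fun σ : Finset ℕ => lam σ ^ (-(2 * p)) * ‖F σ‖ ^ 2)) ∧
    (Summable (fun σ : Finset ℕ => lam σ ^ (-(2 * p)) * ‖F σ‖ ^ 2) →
      IsLeast {M : ℝ | 0 ≤ M ∧ ∀ ξ : Finset ℕ →₀ ℂ,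
          ‖∑ σ ∈ ξ.support, F σ * ξ σ‖
            ≤ M * Real.sqrt (∑ σ ∈ ξ.support, lam σ ^ (2 * p) * ‖ξ σ‖ ^ 2)}
        (Real.sqrt (∑' σ : Finset ℕ, lam σ ^ (-(2 * p)) * ‖F σ‖ ^ 2))) :=
  stmt2_general p F
end

section
/- Let F : Γ → ℂ, n ∈ ℕ, and σ ∈ Γ, and set Ψ_n = ∑_{k=0}^{n} 𝔈_k(𝔞_k†(𝔞_k F)). Then Ψ_n(σ) = 0 if σ = ∅; Ψ_n(σ) = 0 if σ ≠ ∅ and n < max σ; and Ψ_n(σ) = F(σ) if σ ≠ ∅ and n ≥ max σ. -/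
open scoped BigOperators

/-! `𝔞_k† 𝔞_k` restricts `F` to the sets containing `k`, and `𝔈_k` to the sets inside `{0, …, k}`,
so the `k`-th term of `Ψ_n` is `F` restricted to the sets whose maximum is `k`. Summing over
`k ≤ n` leaves exactly `F` on the nonempty sets with maximum at most `n`. -/

/-- The annihilation operator: `(𝔞_k F)(σ) = F(σ ∪ {k})` if `k ∉ σ`, else `0`. -/
def ann (k : ℕ) (F : Finset ℕ → ℂ) : Finset ℕ → ℂ :=
  fun σ => if k ∈ σ then 0 else F (insert k σ)

/-- The creation operator: `(𝔞_k† F)(σ) = F(σ \ {k})` if `k ∈ σ`, else `0`. -/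
def cre (k : ℕ) (F : Finset ℕ → ℂ) : Finset ℕ → ℂ :=
  fun σ => if k ∈ σ then F (σ.erase k) else 0

/-- The conditional expectation operator:
`(𝔈_k F)(σ) = F(σ)` if every `j ∈ σ` satisfies `j ≤ k`, else `0`. -/
def cexp (k : ℕ) (F : Finset ℕ → ℂ) : Finset ℕ → ℂ :=
  fun σ => if ∀ j ∈ σ, j ≤ k then F σ else 0

theorem cexp_cre_ann_apply (k : ℕ) (F : Finset ℕ → ℂ) (σ : Finset ℕ) :
    cexp k (cre k (ann k F)) σ = {τ : Finset ℕ | IsGreatest (τ : Set ℕ) k}.indicator F σ := by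
  by_cases hk : k ∈ σ
  · simp [cexp, cre, ann, hk, Finset.insert_erase, Set.indicator_apply, IsGreatest, upperBounds]
  · simp [cexp, cre, hk, IsGreatest]

theorem Finset.isGreatest_iff_max'_eq {α : Type*} [LinearOrder α] {s : Finset α}
    (hs : s.Nonempty) {a : α} : IsGreatest (s : Set α) a ↔ s.max' hs = a :=
  ⟨(s.isGreatest_max' hs).unique, fun h => h ▸ s.isGreatest_max' hs⟩

theorem sum_range_cexp_cre_ann_apply (F : Finset ℕ → ℂ) (n : ℕ) {σ : Finset ℕ}
    (hσ : σ.Nonempty) :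
    ∑ k ∈ Finset.range (n + 1), cexp k (cre k (ann k F)) σ =
      if σ.max' hσ ≤ n then F σ else 0 := by
  classical
  simp only [cexp_cre_ann_apply, Set.indicator_apply, Set.mem_ofPred_eq,
    Finset.isGreatest_iff_max'_eq hσ, Finset.sum_ite_eq, Finset.mem_range, Nat.lt_succ_iff]

/-- Values of the Clark–Ocone partial sums `Ψ_n = ∑_{k=0}^n 𝔈_k 𝔞_k† 𝔞_k F`:
`Ψ_n(∅) = 0`; `Ψ_n(σ) = 0` if `σ ≠ ∅` and `n < max σ`; and `Ψ_n(σ) = F(σ)` if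
`σ ≠ ∅` and `n ≥ max σ`. -/
theorem stmt9 (F : Finset ℕ → ℂ) (n : ℕ) (σ : Finset ℕ) :
    (σ = ∅ → (∑ k ∈ Finset.range (n + 1), cexp k (cre k (ann k F)) σ) = 0) ∧
    (∀ hσ : σ.Nonempty, n < σ.max' hσ →
      (∑ k ∈ Finset.range (n + 1), cexp k (cre k (ann k F)) σ) = 0) ∧
    (∀ hσ : σ.Nonempty, σ.max' hσ ≤ n →
      (∑ k ∈ Finset.range (n + 1), cexp k (cre k (ann k F)) σ) = F σ) := by
  refine ⟨?_, fun hσ hn => ?_, fun hσ hn => ?_⟩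
  · rintro rfl
    simp [cexp_cre_ann_apply, IsGreatest]
  · rw [sum_range_cexp_cre_ann_apply F n hσ, if_neg hn.not_ge]
  · rw [sum_range_cexp_cre_ann_apply F n hσ, if_pos hn]
end

section
/- For every function F : Γ → ℂ and every σ ∈ Γ, the family (k ↦ (𝔞_k†(𝔈_{k-1}(𝔞_k F)))(σ))_{k ∈ ℕ} has at most one nonzero term (namely k = max σ when σ ≠ ∅), its sum over k ∈ ℕ exists, and F(σ) = (𝔈 F)(σ) + ∑_{k=0}^{∞} (𝔞_k†(𝔈_{k-1}(𝔞_k F)))(σ). (This is the Clark–Ocone formula for generalized functionals of a discrete-time normal noise.) -/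
open scoped BigOperators

/-- The expectation operator: `(𝔈 F)(σ) = F(∅)` if `σ = ∅`, else `0`. -/
def expec (F : Finset ℕ → ℂ) : Finset ℕ → ℂ :=
  fun σ => if σ = ∅ then F ∅ else 0

/-- `𝔈_{k-1}` with the convention `𝔈_{-1} = 𝔈`: `cexpm k = 𝔈_{k-1}`. -/
def cexpm : ℕ → (Finset ℕ → ℂ) → Finset ℕ → ℂ
  | 0 => expec
  | k + 1 => cexp k


lemma key (F : Finset ℕ → ℂ) (σ : Finset ℕ) (k : ℕ) :
    cre k (cexpm k (ann k F)) σ =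
      if h : σ.Nonempty then (if k = σ.max' h then F σ else 0) else 0 := by
  by_cases hk : k ∈ σ
  · have hσ : σ.Nonempty := ⟨k, hk⟩
    simp only [cre, hk, if_true, dif_pos hσ]
    by_cases hmax : k = σ.max' hσ
    · rw [if_pos hmax]
      have hall : ∀ j ∈ σ.erase k, j < k := by
        intro j hj
        rcases Finset.mem_erase.mp hj with ⟨hne, hjσ⟩
        exact lt_of_le_of_ne (hmax ▸ σ.le_max' j hjσ) hne
      have hnot : k ∉ σ.erase k := Finset.notMem_erase _ _
      have hins : insert k (σ.erase k) = σ := Finset.insert_erase hk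
      cases k with
      | zero =>
        have he : σ.erase 0 = ∅ :=
          Finset.eq_empty_of_forall_notMem fun j hj =>
            absurd (hall j hj) (Nat.not_lt_zero j)
        rw [he] at hins
        simp only [cexpm, expec, he, if_pos rfl, ann]
        simp [hins]
      | succ n =>
        simp only [cexpm, cexp]
        rw [if_pos (fun j hj => Nat.lt_succ_iff.mp (hall j hj)), ann,
          if_neg hnot, hins]
    · rw [if_neg hmax]
      have hlt : k < σ.max' hσ := lt_of_le_of_ne (σ.le_max' k hk) hmax
      have hmem : σ.max' hσ ∈ σ.erase k :=
        Finset.mem_erase.mpr ⟨Nat.ne_of_gt hlt, σ.max'_mem hσ⟩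
      cases k with
      | zero =>
        simp only [cexpm, expec]
        rw [if_neg (Finset.nonempty_iff_ne_empty.mp ⟨_, hmem⟩)]
      | succ n =>
        simp only [cexpm, cexp]
        rw [if_neg]
        intro hall
        exact absurd (hall _ hmem) (not_le.mpr (Nat.lt_of_succ_lt hlt))
  · rw [cre, if_neg hk]
    split_ifs with h1 h2
    · exact absurd (h2 ▸ σ.max'_mem h1) hk
    · rfl
    · rfl

/-- The Clark–Ocone formula for generalized functionals: for every `σ ∈ Γ` the
family `k ↦ (𝔞_k† 𝔈_{k-1} 𝔞_k F)(σ)` has at most one nonzero term (only possibly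
`k = max σ` when `σ ≠ ∅`), is summable, and
`F(σ) = (𝔈F)(σ) + ∑_{k=0}^∞ (𝔞_k† 𝔈_{k-1} 𝔞_k F)(σ)`. -/
theorem stmt12 (F : Finset ℕ → ℂ) (σ : Finset ℕ) :
    {k : ℕ | cre k (cexpm k (ann k F)) σ ≠ 0}.Subsingleton ∧
    (∀ k : ℕ, cre k (cexpm k (ann k F)) σ ≠ 0 →
      ∃ hσ : σ.Nonempty, k = σ.max' hσ) ∧
    Summable (fun k : ℕ => cre k (cexpm k (ann k F)) σ) ∧
    F σ = expec F σ + ∑' k : ℕ, cre k (cexpm k (ann k F)) σ := by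
  have hmax : ∀ k : ℕ, cre k (cexpm k (ann k F)) σ ≠ 0 →
      ∃ hσ : σ.Nonempty, k = σ.max' hσ := by
    intro k h
    rw [key] at h
    by_cases hσ : σ.Nonempty
    · refine ⟨hσ, ?_⟩
      rw [dif_pos hσ] at h
      by_contra hne
      exact h (if_neg hne)
    · exact absurd (dif_neg hσ) h
  refine ⟨?_, hmax, ?_, ?_⟩
  · intro a ha b hb
    obtain ⟨h1, rfl⟩ := hmax a ha
    obtain ⟨h2, rfl⟩ := hmax b hb
    rfl
  · by_cases hσ : σ.Nonempty
    · apply summable_of_ne_finset_zero (s := {σ.max' hσ})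
      intro k hk
      rw [key, dif_pos hσ, if_neg (by simpa using hk)]
    · apply summable_of_ne_finset_zero (s := ∅)
      intro k _
      rw [key, dif_neg hσ]
  · by_cases hσ : σ.Nonempty
    · rw [tsum_eq_single (σ.max' hσ)]
      · rw [key, dif_pos hσ, if_pos rfl, expec,
          if_neg (Finset.nonempty_iff_ne_empty.mp hσ)]
        ring
      · intro k hk
        rw [key, dif_pos hσ, if_neg hk]
    · have hz : (fun k : ℕ => cre k (cexpm k (ann k F)) σ) = fun _ => 0 :=
        funext fun k => by rw [key, dif_neg hσ]
      have he : σ = ∅ := Finset.not_nonempty_iff_eq_empty.mp hσ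
      rw [hz, tsum_zero, he]
      simp [expec]
end

section
/- Let p ≥ 0 be a real number and let F, G : Γ → ℂ satisfy ∑_{σ ∈ Γ} λ_σ^{-2p} |F(σ)|² < ∞ and ∑_{σ ∈ Γ} λ_σ^{-2p} |G(σ)|² < ∞. Then the covariance identity holds: ∑_{σ ∈ Γ} λ_σ^{-2p} (F(σ) − (𝔈F)(σ)) · conj(G(σ) − (𝔈G)(σ)) = ∑_{k=0}^{∞} ( ∑_{σ ∈ Γ} λ_σ^{-2p} (𝔈_k(𝔞_k†(𝔞_k F)))(σ) · conj((𝔈_k(𝔞_k†(𝔞_k G)))(σ)) ), where all series converge absolutely. -/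
/-!
`𝔈_k 𝔞_k† 𝔞_k F` is `F` restricted to the nonempty `σ` whose largest element is `k`, and
`F - 𝔈F` is `F` restricted to all nonempty `σ`. So the right-hand side regroups the absolutely
convergent series of the left-hand side along the fibres of `σ ↦ max σ`; absolute convergence
of that series is the weighted Cauchy–Schwarz bound `2 |F conj G| ≤ |F|² + |G|²`.
-/

open scoped BigOperators ComplexConjugate

section Fiberwise

variable {α β γ : Type*}

theorem HasSum.tsum_ite_fiberwise [AddCommGroup α] [UniformSpace α] [IsUniformAddGroup α]
    [CompleteSpace α] [T2Space α] [DecidableEq γ] {f : β → α} {a : α} (hf : HasSum f a)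
    (m : β → γ) :
    HasSum (fun c => ∑' b, if m b = c then f b else 0) a := by
  convert hf.tsum_fiberwise m using 2 with c
  rw [tsum_subtype]
  congr with b
  by_cases h : m b = c <;> simp [h]

theorem summable_norm_tsum_ite_fiberwise [NormedAddCommGroup α] [CompleteSpace α] [DecidableEq γ]
    {f : β → α} (hf : Summable fun b => ‖f b‖) (m : β → γ) :
    Summable fun c => ‖∑' b, if m b = c then f b else 0‖ := by
  have hfc (c : γ) : Summable fun b => ‖if m b = c then f b else 0‖ :=
    hf.of_nonneg_of_le (fun _ => norm_nonneg _) fun b => by split_ifs <;> simp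
  refine (hf.hasSum.tsum_ite_fiberwise m).summable.of_nonneg_of_le (fun _ => norm_nonneg _)
    fun c => (norm_tsum_le_tsum_norm (hfc c)).trans_eq (tsum_congr fun b => ?_)
  split_ifs <;> simp

end Fiberwise

theorem Complex.summable_norm_mul_conj {β : Type*} {w : β → ℝ} (hw : ∀ b, 0 ≤ w b)
    {F G : β → ℂ} (hF : Summable fun b => w b * ‖F b‖ ^ 2)
    (hG : Summable fun b => w b * ‖G b‖ ^ 2) :
    Summable fun b => ‖(w b : ℂ) * (F b * conj (G b))‖ := by
  refine ((hF.add hG).div_const 2).of_nonneg_of_le (fun _ => norm_nonneg _) fun b => ?_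
  rw [norm_mul, norm_mul, Complex.norm_conj, Complex.norm_of_nonneg (hw b)]
  nlinarith [mul_nonneg (hw b) (sq_nonneg (‖F b‖ - ‖G b‖))]

theorem Finset.sup_id_eq_iff {α : Type*} [LinearOrder α] [OrderBot α] {s : Finset α}
    (hs : s.Nonempty) {a : α} : s.sup id = a ↔ a ∈ s ∧ ∀ b ∈ s, b ≤ a := by
  constructor
  · rintro rfl
    obtain ⟨i, hi, hsup⟩ := s.exists_mem_eq_sup hs id
    exact ⟨hsup ▸ hi, fun b hb => s.le_sup (f := id) hb⟩
  · rintro ⟨ha, hle⟩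
    exact le_antisymm (Finset.sup_le hle) (s.le_sup (f := id) ha)

lemma sub_expec_apply (F : Finset ℕ → ℂ) (σ : Finset ℕ) :
    F σ - expec F σ = if σ = ∅ then 0 else F σ := by
  by_cases h : σ = ∅ <;> simp [expec, h]

lemma cexp_cre_ann_apply_s13 (k : ℕ) (F : Finset ℕ → ℂ) (σ : Finset ℕ) :
    cexp k (cre k (ann k F)) σ = if k ∈ σ ∧ ∀ j ∈ σ, j ≤ k then F σ else 0 := by
  by_cases hle : ∀ j ∈ σ, j ≤ k
  · by_cases hk : k ∈ σ
    · simp [cexp, cre, ann, hk, Finset.insert_erase hk]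
    · simp [cexp, cre, hk]
  · simp [cexp, hle]

/-- Both sides vanish at `σ = ∅`, so `σ.sup id` (which is `0` there) can stand for `max σ`. -/
lemma mul_cexp_cre_ann_eq_ite (c : ℂ) (k : ℕ) (F G : Finset ℕ → ℂ) (σ : Finset ℕ) :
    c * (cexp k (cre k (ann k F)) σ * conj (cexp k (cre k (ann k G)) σ))
      = if σ.sup id = k then c * ((F σ - expec F σ) * conj (G σ - expec G σ)) else 0 := by
  rw [cexp_cre_ann_apply_s13, cexp_cre_ann_apply_s13, sub_expec_apply, sub_expec_apply]
  rcases σ.eq_empty_or_nonempty with rfl | hσ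
  · simp
  · simp only [← Finset.sup_id_eq_iff hσ, hσ.ne_empty, if_false]
    split_ifs <;> simp

theorem stmt13_general (p : ℝ) (F G : Finset ℕ → ℂ)
    (hF : Summable (fun σ : Finset ℕ => lam σ ^ (-(2 * p)) * ‖F σ‖ ^ 2))
    (hG : Summable (fun σ : Finset ℕ => lam σ ^ (-(2 * p)) * ‖G σ‖ ^ 2)) :
    Summable (fun σ : Finset ℕ =>
      ‖(↑(lam σ ^ (-(2 * p))) : ℂ) * ((F σ - expec F σ) * conj (G σ - expec G σ))‖) ∧
    (∀ k : ℕ, Summable (fun σ : Finset ℕ =>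
      ‖(↑(lam σ ^ (-(2 * p))) : ℂ) *
        (cexp k (cre k (ann k F)) σ * conj (cexp k (cre k (ann k G)) σ))‖)) ∧
    Summable (fun k : ℕ =>
      ‖∑' σ : Finset ℕ, (↑(lam σ ^ (-(2 * p))) : ℂ) *
        (cexp k (cre k (ann k F)) σ * conj (cexp k (cre k (ann k G)) σ))‖) ∧
    (∑' σ : Finset ℕ, (↑(lam σ ^ (-(2 * p))) : ℂ) *
        ((F σ - expec F σ) * conj (G σ - expec G σ)))
      = ∑' k : ℕ, ∑' σ : Finset ℕ, (↑(lam σ ^ (-(2 * p))) : ℂ) *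
          (cexp k (cre k (ann k F)) σ * conj (cexp k (cre k (ann k G)) σ)) := by
  have hw (σ : Finset ℕ) : 0 ≤ lam σ ^ (-(2 * p)) :=
    Real.rpow_nonneg (Finset.prod_nonneg fun _ _ => by positivity) _
  have hcov : Summable fun σ : Finset ℕ =>
      ‖(↑(lam σ ^ (-(2 * p))) : ℂ) * ((F σ - expec F σ) * conj (G σ - expec G σ))‖ := by
    refine (Complex.summable_norm_mul_conj hw hF hG).of_nonneg_of_le (fun _ => norm_nonneg _)
      fun σ => ?_
    rw [sub_expec_apply, sub_expec_apply]
    split_ifs <;> simp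
    positivity
  simp only [mul_cexp_cre_ann_eq_ite]
  refine ⟨hcov, fun k => hcov.of_nonneg_of_le (fun _ => norm_nonneg _) fun σ => ?_,
    summable_norm_tsum_ite_fiberwise hcov _,
    ((hcov.of_norm.hasSum.tsum_ite_fiberwise _).tsum_eq).symm⟩
  split_ifs <;> simp
  positivity

/-- The covariance identity
`Cov_p(F, G) = ∑_{k=0}^∞ ⟨𝔈_k 𝔞_k† 𝔞_k F, 𝔈_k 𝔞_k† 𝔞_k G⟩_{-p}`,
with all the series converging absolutely. -/
theorem stmt13 (p : ℝ) (hp : 0 ≤ p) (F G : Finset ℕ → ℂ)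
    (hF : Summable (fun σ : Finset ℕ => lam σ ^ (-(2 * p)) * ‖F σ‖ ^ 2))
    (hG : Summable (fun σ : Finset ℕ => lam σ ^ (-(2 * p)) * ‖G σ‖ ^ 2)) :
    Summable (fun σ : Finset ℕ =>
      ‖(↑(lam σ ^ (-(2 * p))) : ℂ) * ((F σ - expec F σ) * conj (G σ - expec G σ))‖) ∧
    (∀ k : ℕ, Summable (fun σ : Finset ℕ =>
      ‖(↑(lam σ ^ (-(2 * p))) : ℂ) *
        (cexp k (cre k (ann k F)) σ * conj (cexp k (cre k (ann k G)) σ))‖)) ∧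
    Summable (fun k : ℕ =>
      ‖∑' σ : Finset ℕ, (↑(lam σ ^ (-(2 * p))) : ℂ) *
        (cexp k (cre k (ann k F)) σ * conj (cexp k (cre k (ann k G)) σ))‖) ∧
    (∑' σ : Finset ℕ, (↑(lam σ ^ (-(2 * p))) : ℂ) *
        ((F σ - expec F σ) * conj (G σ - expec G σ)))
      = ∑' k : ℕ, ∑' σ : Finset ℕ, (↑(lam σ ^ (-(2 * p))) : ℂ) *
          (cexp k (cre k (ann k F)) σ * conj (cexp k (cre k (ann k G)) σ)) :=
  stmt13_general p F G hF hG
end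

section
/- Let p ≥ 0 be a real number and let F : Γ → ℂ satisfy ∑_{σ ∈ Γ} λ_σ^{-2p} |F(σ)|² < ∞. Define u_k = 𝔈_{k-1}(𝔞_k F) for k ∈ ℕ (with 𝔈_{-1} = 𝔈). Then (i) the sequence (u_k) is predictable, i.e. 𝔈_{k-1} u_k = u_k for every k ∈ ℕ; and (ii) the partial sums ∑_{k=0}^{n} 𝔞_k† u_k converge to F − 𝔈F in the ‖·‖_{-p} norm, i.e. ∑_{σ ∈ Γ} λ_σ^{-2p} |∑_{k=0}^{n} (𝔞_k† u_k)(σ) − (F(σ) − (𝔈F)(σ))|² → 0 as n → ∞. (Thus every generalized functional is the sum of its expectation and the generalized stochastic integral of a predictable generalized process.) -/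
open scoped BigOperators

/-! The `k`-th integrand `𝔞_k† 𝔈_{k-1} 𝔞_k F` is `F` restricted to the sets whose largest
element is `k`, so the `n`-th partial sum is `F` restricted to the nonempty `σ ⊆ {0, …, n}`.
The residual `F - 𝔈F - ∑_{k ≤ n} 𝔞_k† u_k` is then `F` restricted to the `σ ⊄ {0, …, n}`, and
its `‖·‖_{-p}`-norm is a tail of the convergent series `∑_σ λ_σ^{-2p} |F σ|²`. -/

open Finset Filter Topology

lemma cexpm_apply (k : ℕ) (G : Finset ℕ → ℂ) (σ : Finset ℕ) :
    cexpm k G σ = if ∀ j ∈ σ, j < k then G σ else 0 := by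
  cases k with
  | zero =>
    simp only [cexpm, expec, Nat.not_lt_zero, imp_false, ← eq_empty_iff_forall_notMem]
    split_ifs with h <;> simp [h]
  | succ k => simp only [cexpm, cexp, Nat.lt_succ_iff]

lemma cexpm_cexpm (k : ℕ) (G : Finset ℕ → ℂ) : cexpm k (cexpm k G) = cexpm k G := by
  funext σ
  simp only [cexpm_apply]
  split_ifs <;> rfl

lemma forall_mem_erase_lt_iff_isGreatest {k : ℕ} {σ : Finset ℕ} (hk : k ∈ σ) :
    (∀ j ∈ σ.erase k, j < k) ↔ IsGreatest (σ : Set ℕ) k := by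
  refine ⟨fun h => ⟨hk, fun j hj => ?_⟩, fun h j hj => ?_⟩
  · rcases eq_or_ne j k with rfl | hjk
    · exact le_rfl
    · exact (h j (mem_erase.2 ⟨hjk, hj⟩)).le
  · exact lt_of_le_of_ne (h.2 (mem_of_mem_erase hj)) (ne_of_mem_erase hj)

open Classical in
lemma cre_cexpm_ann_apply (k : ℕ) (F : Finset ℕ → ℂ) (σ : Finset ℕ) :
    cre k (cexpm k (ann k F)) σ = if IsGreatest (σ : Set ℕ) k then F σ else 0 := by
  by_cases hk : k ∈ σ
  · simp only [cre, cexpm_apply, ann, hk, if_true, notMem_erase, if_false, insert_erase hk,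
      forall_mem_erase_lt_iff_isGreatest hk]
  · simp [cre, hk, IsGreatest]

lemma sum_range_cre_cexpm_ann_apply (n : ℕ) (F : Finset ℕ → ℂ) (σ : Finset ℕ) :
    ∑ k ∈ range (n + 1), cre k (cexpm k (ann k F)) σ =
      if σ.Nonempty ∧ σ ⊆ range (n + 1) then F σ else 0 := by
  simp only [cre_cexpm_ann_apply]
  rcases σ.eq_empty_or_nonempty with rfl | hne
  · simp [IsGreatest, upperBounds]
  · have hmax : ∀ k, IsGreatest (σ : Set ℕ) k ↔ σ.max' hne = k := fun k =>
      ⟨(isGreatest_max' σ hne).unique, fun h => h ▸ isGreatest_max' σ hne⟩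
    have hsub : σ.max' hne ∈ range (n + 1) ↔ σ ⊆ range (n + 1) :=
      ⟨fun h j hj => mem_range.2 ((le_max' σ j hj).trans_lt (mem_range.1 h)),
        fun h => h (max'_mem σ hne)⟩
    simp only [hmax, sum_ite_eq, hsub, hne, true_and]

lemma norm_sum_range_cre_cexpm_ann_sub (n : ℕ) (F : Finset ℕ → ℂ) (σ : Finset ℕ) :
    ‖(∑ k ∈ range (n + 1), cre k (cexpm k (ann k F)) σ) - (F σ - expec F σ)‖ =
      if σ ⊆ range (n + 1) then 0 else ‖F σ‖ := by
  rw [sum_range_cre_cexpm_ann_apply]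
  rcases σ.eq_empty_or_nonempty with rfl | hne
  · simp [expec]
  · by_cases hσ : σ ⊆ range (n + 1) <;> simp [expec, hne, hne.ne_empty, hσ]

lemma tendsto_powerset_range_atTop :
    Tendsto (fun n : ℕ => (range (n + 1)).powerset) atTop atTop :=
  tendsto_atTop_finset_of_monotone
    (fun _ _ hmn => powerset_mono.2 (range_subset_range.2 (Nat.succ_le_succ hmn)))
    (fun σ => ⟨σ.sup id, mem_powerset.2 (subset_range_sup_succ σ)⟩)

lemma tendsto_tsum_compl_of_summable {α G : Type*} [AddCommGroup G] [TopologicalSpace G]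
    [IsTopologicalAddGroup G] [T2Space G] {g : α → G} (hg : Summable g)
    {s : ℕ → Finset α} (hs : Tendsto s atTop atTop) :
    Tendsto (fun n => ∑' a : ↑(s n : Set α)ᶜ, g a) atTop (𝓝 0) := by
  have htail : ∀ n, ∑' a : ↑(s n : Set α)ᶜ, g a = ∑' a, g a - ∑ a ∈ s n, g a := fun n =>
    eq_sub_of_add_eq' (hg.sum_add_tsum_compl (s := s n))
  simpa only [htail, sub_self, Function.comp_def] using
    (tendsto_const_nhds (x := ∑' a, g a)).sub (hg.hasSum.comp hs)

theorem stmt15_general (p : ℝ) (F : Finset ℕ → ℂ)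
    (hF : Summable (fun σ : Finset ℕ => lam σ ^ (-(2 * p)) * ‖F σ‖ ^ 2)) :
    (∀ k : ℕ, ∀ σ : Finset ℕ,
      cexpm k (cexpm k (ann k F)) σ = cexpm k (ann k F) σ) ∧
    Filter.Tendsto
      (fun n : ℕ => ∑' σ : Finset ℕ, lam σ ^ (-(2 * p)) *
        ‖(∑ k ∈ Finset.range (n + 1), cre k (cexpm k (ann k F)) σ) -
          (F σ - expec F σ)‖ ^ 2)
      Filter.atTop (nhds 0) := by
  refine ⟨fun k σ => congrFun (cexpm_cexpm k _) σ, ?_⟩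
  have hresidual : ∀ n, (∑' σ : Finset ℕ, lam σ ^ (-(2 * p)) *
      ‖(∑ k ∈ range (n + 1), cre k (cexpm k (ann k F)) σ) - (F σ - expec F σ)‖ ^ 2) =
      ∑' σ : ↑((range (n + 1)).powerset : Set (Finset ℕ))ᶜ, lam σ ^ (-(2 * p)) * ‖F σ‖ ^ 2 := by
    intro n
    rw [_root_.tsum_subtype _ fun σ => lam σ ^ (-(2 * p)) * ‖F σ‖ ^ 2]
    refine tsum_congr fun σ => ?_
    by_cases hσ : σ ⊆ range (n + 1) <;>
      simp [norm_sum_range_cre_cexpm_ann_sub, -coe_powerset, hσ]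
  simpa only [hresidual] using tendsto_tsum_compl_of_summable hF tendsto_powerset_range_atTop

/-- With `u_k = 𝔈_{k-1} 𝔞_k F`, the sequence `(u_k)` is `(𝔈_k)`-predictable and the
partial sums of the generalized stochastic integral `∑_k 𝔞_k† u_k` converge to
`F − 𝔈F` in the `‖·‖_{-p}` norm. -/
theorem stmt15 (p : ℝ) (hp : 0 ≤ p) (F : Finset ℕ → ℂ)
    (hF : Summable (fun σ : Finset ℕ => lam σ ^ (-(2 * p)) * ‖F σ‖ ^ 2)) :
    (∀ k : ℕ, ∀ σ : Finset ℕ,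
      cexpm k (cexpm k (ann k F)) σ = cexpm k (ann k F) σ) ∧
    Filter.Tendsto
      (fun n : ℕ => ∑' σ : Finset ℕ, lam σ ^ (-(2 * p)) *
        ‖(∑ k ∈ Finset.range (n + 1), cre k (cexpm k (ann k F)) σ) -
          (F σ - expec F σ)‖ ^ 2)
      Filter.atTop (nhds 0) :=
  stmt15_general p F hF
end

section
/- Let Z = (Z_n)_{n ∈ ℕ} be a discrete-time normal noise on a probability space (Ω, 𝒜, P). Then for every σ ∈ Finset ℕ the random variable Z_σ = ∏_{i ∈ σ} Z_i is square integrable, and for all σ, τ ∈ Finset ℕ, E[Z_σ · Z_τ] = 1 if σ = τ and E[Z_σ · Z_τ] = 0 if σ ≠ τ; i.e., the canonical functional system {Z_σ : σ ∈ Finset ℕ} forms an orthonormal system in L²(Ω, 𝒜, P). -/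
/-!
Let `n` be the largest index in `σ ∪ τ`. The remaining factors of `Z_σ Z_τ` are
`ℱ_{n-1}`-measurable, so conditioning on `ℱ_{n-1}` replaces `Z_n²` by `1` when `n` lies in both
sets and `Z_n` by `0` when it lies in only one; induction on `n` gives orthonormality. Square
integrability comes first, by the same conditioning applied to `Z_{σ ∪ {n}}² = Z_n² Z_σ²`; since
integrability is what is being proved there, that step is carried out with lower integrals.
-/

open scoped ENNReal
open MeasureTheory Finset

namespace MeasureTheory

variable {Ω : Type*} {m m0 : MeasurableSpace Ω} {P : Measure Ω}

theorem lintegral_ofReal_mul_eq_lintegral_condExp_mul (hm : m ≤ m0) [SigmaFinite (P.trim hm)]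
    {g : Ω → ℝ} {F : Ω → ℝ≥0∞} (hg : Integrable g P) (hg0 : 0 ≤ᵐ[P] g) (hF : Measurable[m] F) :
    ∫⁻ ω, ENNReal.ofReal (g ω) * F ω ∂P = ∫⁻ ω, ENNReal.ofReal (P[g|m] ω) * F ω ∂P := by
  -- No integrability of `F` is needed: `g • P` and `P[g|m] • P` agree on `m`-measurable sets, and
  -- the integral of the `m`-measurable `F` only sees their traces on `m`.
  have htrim : (P.withDensity fun ω => ENNReal.ofReal (g ω)).trim hm =
      (P.withDensity fun ω => ENNReal.ofReal (P[g|m] ω)).trim hm := by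
    refine @Measure.ext _ m _ _ fun s hs => ?_
    rw [trim_measurableSet_eq hm hs, trim_measurableSet_eq hm hs,
      withDensity_apply _ (hm s hs), withDensity_apply _ (hm s hs),
      ← ofReal_integral_eq_lintegral_ofReal hg.integrableOn (ae_restrict_of_ae hg0),
      ← ofReal_integral_eq_lintegral_ofReal integrable_condExp.integrableOn
        (ae_restrict_of_ae (condExp_nonneg hg0)), setIntegral_condExp hm hg hs]
  have hF0 : Measurable[m0] F := hF.mono hm le_rfl
  calc ∫⁻ ω, ENNReal.ofReal (g ω) * F ω ∂P
      = ∫⁻ ω, F ω ∂(P.withDensity fun ω => ENNReal.ofReal (g ω)).trim hm := by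
        rw [lintegral_trim hm hF, lintegral_withDensity_eq_lintegral_mul₀
          hg.1.aemeasurable.ennreal_ofReal hF0.aemeasurable]
        rfl
    _ = ∫⁻ ω, ENNReal.ofReal (P[g|m] ω) * F ω ∂P := by
        rw [htrim, lintegral_trim hm hF, lintegral_withDensity_eq_lintegral_mul₀
          integrable_condExp.1.aemeasurable.ennreal_ofReal hF0.aemeasurable]
        rfl

theorem integrable_mul_of_condExp_le (hm : m ≤ m0) [SigmaFinite (P.trim hm)]
    {g F : Ω → ℝ} {C : ℝ} (hg : Integrable g P) (hg0 : 0 ≤ᵐ[P] g)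
    (hgC : P[g|m] ≤ᵐ[P] fun _ => C) (hF : Integrable F P) (hFm : StronglyMeasurable[m] F) :
    Integrable (fun ω => g ω * F ω) P := by
  refine ⟨hg.1.mul (hFm.mono hm).aestronglyMeasurable, ?_⟩
  calc ∫⁻ ω, ‖g ω * F ω‖ₑ ∂P
      = ∫⁻ ω, ENNReal.ofReal (g ω) * ‖F ω‖ₑ ∂P := by
        refine lintegral_congr_ae ?_
        filter_upwards [hg0] with ω hω
        rw [enorm_mul, Real.enorm_eq_ofReal hω]
    _ = ∫⁻ ω, ENNReal.ofReal (P[g|m] ω) * ‖F ω‖ₑ ∂P :=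
        lintegral_ofReal_mul_eq_lintegral_condExp_mul hm hg hg0
          (measurable_enorm.comp hFm.measurable)
    _ ≤ ∫⁻ ω, ENNReal.ofReal C * ‖F ω‖ₑ ∂P := by
        refine lintegral_mono_ae ?_
        filter_upwards [hgC] with ω hω
        gcongr
    _ = ENNReal.ofReal C * ∫⁻ ω, ‖F ω‖ₑ ∂P := lintegral_const_mul' _ _ ENNReal.ofReal_ne_top
    _ < ∞ := ENNReal.mul_lt_top ENNReal.ofReal_lt_top hF.2

theorem integral_mul_of_condExp_eq_const (hm : m ≤ m0) [SigmaFinite (P.trim hm)]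
    {g F : Ω → ℝ} {c : ℝ} (hg : Integrable g P) (hgc : P[g|m] =ᵐ[P] fun _ => c)
    (hgF : Integrable (fun ω => g ω * F ω) P) (hFm : StronglyMeasurable[m] F) :
    ∫ ω, g ω * F ω ∂P = c * ∫ ω, F ω ∂P := by
  rw [← integral_condExp hm, ← integral_const_mul]
  refine integral_congr_ae ?_
  filter_upwards [condExp_mul_of_stronglyMeasurable_right hFm hgF hg, hgc] with ω h1 h2
  exact h1.trans (by rw [Pi.mul_apply, h2])

end MeasureTheory

/-- `G n` plays the role of `ℱ_{n-1}`, so it only has to make `Z 0, …, Z (n-1)` measurable. -/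
structure IsNormalNoise {Ω : Type*} [m0 : MeasurableSpace Ω] (P : Measure Ω) (Z : ℕ → Ω → ℝ)
    (G : ℕ → MeasurableSpace Ω) : Prop where
  le : ∀ n, G n ≤ m0
  measurable : ∀ {i n}, i < n → Measurable[G n] (Z i)
  integrable : ∀ n, Integrable (Z n) P
  integrable_sq : ∀ n, Integrable (fun ω => Z n ω ^ 2) P
  condExp_eq_zero : ∀ n, P[Z n|G n] =ᵐ[P] 0
  condExp_sq_eq_one : ∀ n, P[fun ω => Z n ω ^ 2|G n] =ᵐ[P] fun _ => 1

namespace Finset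

theorem exists_subset_range_eq_or_eq_insert {n : ℕ} {ρ : Finset ℕ} (hρ : ρ ⊆ range (n + 1)) :
    ∃ ρ' ⊆ range n, ρ = ρ' ∨ ρ = insert n ρ' := by
  refine ⟨ρ.erase n, by rwa [← subset_insert_iff, ← range_add_one], ?_⟩
  by_cases hn : n ∈ ρ
  · exact Or.inr (insert_erase hn).symm
  · exact Or.inl (erase_eq_of_notMem hn).symm

theorem ne_insert_of_subset_range {n : ℕ} {σ : Finset ℕ} (hσ : σ ⊆ range n) (τ : Finset ℕ) :
    σ ≠ insert n τ :=
  fun h => notMem_range_self (hσ (h ▸ mem_insert_self n τ))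

theorem insert_inj_of_notMem {α : Type*} [DecidableEq α] {a : α} {s t : Finset α} (hs : a ∉ s)
    (ht : a ∉ t) : insert a s = insert a t ↔ s = t :=
  ⟨fun h => by rw [← erase_insert hs, h, erase_insert ht], congrArg (insert a)⟩

end Finset

namespace IsNormalNoise

variable {Ω : Type*} [m0 : MeasurableSpace Ω] {P : Measure Ω} {Z : ℕ → Ω → ℝ}
  {G : ℕ → MeasurableSpace Ω}

theorem stronglyMeasurable_prod (hZ : IsNormalNoise P Z G) {n : ℕ} {σ : Finset ℕ}
    (hσ : σ ⊆ range n) : StronglyMeasurable[G n] fun ω => ∏ i ∈ σ, Z i ω :=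
  (Finset.measurable_prod σ fun _ hi => hZ.measurable (mem_range.mp (hσ hi))).stronglyMeasurable

theorem measurable_prod (hZ : IsNormalNoise P Z G) (σ : Finset ℕ) :
    Measurable fun ω => ∏ i ∈ σ, Z i ω :=
  Finset.measurable_prod σ fun i _ => (hZ.measurable (Nat.lt_succ_self i)).mono (hZ.le _) le_rfl

section FiniteMeasure

variable [IsFiniteMeasure P]

theorem memLp_two_prod (hZ : IsNormalNoise P Z G) (σ : Finset ℕ) :
    MemLp (fun ω => ∏ i ∈ σ, Z i ω) 2 P := by
  induction σ using Finset.induction_on_max with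
  | empty => simpa using memLp_const (1 : ℝ)
  | insert n σ hlt ih =>
    have hnσ : n ∉ σ := fun h => (hlt n h).false
    have hσ : σ ⊆ range n := fun i hi => mem_range.mpr (hlt i hi)
    rw [memLp_two_iff_integrable_sq (hZ.measurable_prod _).aestronglyMeasurable]
    simp_rw [prod_insert hnσ, mul_pow]
    exact integrable_mul_of_condExp_le (hZ.le n) (hZ.integrable_sq n)
      (ae_of_all _ fun ω => sq_nonneg _) (hZ.condExp_sq_eq_one n).le
      ((memLp_two_iff_integrable_sq (hZ.measurable_prod σ).aestronglyMeasurable).mp ih)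
      ((hZ.stronglyMeasurable_prod hσ).pow 2)

theorem integrable_prod_mul_prod (hZ : IsNormalNoise P Z G) (σ τ : Finset ℕ) :
    Integrable (fun ω => (∏ i ∈ σ, Z i ω) * ∏ i ∈ τ, Z i ω) P :=
  (hZ.memLp_two_prod σ).integrable_mul (hZ.memLp_two_prod τ)

theorem integral_prod_insert_mul_prod_insert (hZ : IsNormalNoise P Z G) {n : ℕ}
    {σ τ : Finset ℕ} (hσ : σ ⊆ range n) (hτ : τ ⊆ range n) :
    ∫ ω, (∏ i ∈ insert n σ, Z i ω) * ∏ i ∈ insert n τ, Z i ω ∂P =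
      ∫ ω, (∏ i ∈ σ, Z i ω) * ∏ i ∈ τ, Z i ω ∂P := by
  have hsplit : ∀ ω, (∏ i ∈ insert n σ, Z i ω) * ∏ i ∈ insert n τ, Z i ω =
      Z n ω ^ 2 * ((∏ i ∈ σ, Z i ω) * ∏ i ∈ τ, Z i ω) := fun ω => by
    rw [prod_insert (notMem_range_self <| hσ ·), prod_insert (notMem_range_self <| hτ ·)]
    ring
  simp_rw [hsplit]
  rw [integral_mul_of_condExp_eq_const (F := fun ω => (∏ i ∈ σ, Z i ω) * ∏ i ∈ τ, Z i ω)
    (hZ.le n) (hZ.integrable_sq n) (hZ.condExp_sq_eq_one n)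
    (by simpa only [← hsplit] using hZ.integrable_prod_mul_prod (insert n σ) (insert n τ))
    ((hZ.stronglyMeasurable_prod hσ).mul (hZ.stronglyMeasurable_prod hτ)), one_mul]

theorem integral_prod_insert_mul_prod (hZ : IsNormalNoise P Z G) {n : ℕ}
    {σ τ : Finset ℕ} (hσ : σ ⊆ range n) (hτ : τ ⊆ range n) :
    ∫ ω, (∏ i ∈ insert n σ, Z i ω) * ∏ i ∈ τ, Z i ω ∂P = 0 := by
  have hsplit : ∀ ω, (∏ i ∈ insert n σ, Z i ω) * ∏ i ∈ τ, Z i ω =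
      Z n ω * ((∏ i ∈ σ, Z i ω) * ∏ i ∈ τ, Z i ω) := fun ω => by
    rw [prod_insert (notMem_range_self <| hσ ·)]
    ring
  simp_rw [hsplit]
  rw [integral_mul_of_condExp_eq_const (F := fun ω => (∏ i ∈ σ, Z i ω) * ∏ i ∈ τ, Z i ω) (c := 0)
    (hZ.le n) (hZ.integrable n) (hZ.condExp_eq_zero n)
    (by simpa only [← hsplit] using hZ.integrable_prod_mul_prod (insert n σ) τ)
    ((hZ.stronglyMeasurable_prod hσ).mul (hZ.stronglyMeasurable_prod hτ)), zero_mul]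

end FiniteMeasure

theorem integral_prod_mul_prod_of_subset_range [IsProbabilityMeasure P]
    (hZ : IsNormalNoise P Z G) (n : ℕ) {σ τ : Finset ℕ} (hσ : σ ⊆ range n) (hτ : τ ⊆ range n) :
    ∫ ω, (∏ i ∈ σ, Z i ω) * ∏ i ∈ τ, Z i ω ∂P = if σ = τ then 1 else 0 := by
  induction n generalizing σ τ with
  | zero =>
    obtain rfl : σ = ∅ := subset_empty.mp hσ
    obtain rfl : τ = ∅ := subset_empty.mp hτ
    simp
  | succ n ih =>
    obtain ⟨σ, hσ', rfl | rfl⟩ := exists_subset_range_eq_or_eq_insert hσ <;>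
    obtain ⟨τ, hτ', rfl | rfl⟩ := exists_subset_range_eq_or_eq_insert hτ
    · exact ih hσ' hτ'
    · simp_rw [mul_comm (∏ i ∈ σ, Z i _)]
      rw [hZ.integral_prod_insert_mul_prod hτ' hσ', if_neg (ne_insert_of_subset_range hσ' τ)]
    · rw [hZ.integral_prod_insert_mul_prod hσ' hτ',
        if_neg (ne_insert_of_subset_range hτ' σ).symm]
    · rw [hZ.integral_prod_insert_mul_prod_insert hσ' hτ', ih hσ' hτ']
      simp only [insert_inj_of_notMem (notMem_range_self <| hσ' ·) (notMem_range_self <| hτ' ·)]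

end IsNormalNoise

/-- A discrete-time normal noise: `Z = (Z_n)` with `E[Z_n | ℱ_{n-1}] = 0` and
`E[Z_n² | ℱ_{n-1}] = 1` a.s., where `ℱ_{-1}` is the trivial σ-algebra and `ℱ_n` is
generated by `Z_0, …, Z_n`. Its canonical functional system `Z_σ = ∏_{i ∈ σ} Z_i`
is an orthonormal system in `L²`. -/
theorem stmt16 {Ω : Type*} [m0 : MeasurableSpace Ω] (P : Measure Ω)
    [IsProbabilityMeasure P] (Z : ℕ → Ω → ℝ)
    (hmeas : ∀ n, Measurable (Z n))
    (hint : ∀ n, Integrable (Z n) P)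
    (hint2 : ∀ n, Integrable (fun ω => (Z n ω) ^ 2) P)
    (G : ℕ → MeasurableSpace Ω)
    (hG0 : G 0 = ⊥)
    (hGs : ∀ n, G (n + 1) =
      ⨆ i ∈ Finset.range (n + 1), MeasurableSpace.comap (Z i) (inferInstance : MeasurableSpace ℝ))
    (hzero : ∀ n, P[Z n|G n] =ᵐ[P] 0)
    (hone : ∀ n, P[fun ω => (Z n ω) ^ 2|G n] =ᵐ[P] fun _ => 1) :
    (∀ σ : Finset ℕ, MemLp (fun ω => ∏ i ∈ σ, Z i ω) 2 P) ∧
    (∀ σ τ : Finset ℕ,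
      ∫ ω, (∏ i ∈ σ, Z i ω) * (∏ i ∈ τ, Z i ω) ∂P = if σ = τ then 1 else 0) := by
  have hG : ∀ n, G n = ⨆ i ∈ range n, MeasurableSpace.comap (Z i) inferInstance := by
    rintro (_ | n)
    · simp [hG0]
    · exact hGs n
  have hZ : IsNormalNoise P Z G :=
    { le := fun n => (hG n).trans_le (iSup₂_le fun i _ => (hmeas i).comap_le)
      measurable := fun {i n} hi => by
        rw [hG n]
        exact Measurable.of_comap_le (le_iSup₂_of_le i (mem_range.mpr hi) le_rfl)
      integrable := hint
      integrable_sq := hint2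
      condExp_eq_zero := hzero
      condExp_sq_eq_one := hone }
  refine ⟨hZ.memLp_two_prod, fun σ τ => ?_⟩
  obtain ⟨n, hn⟩ := exists_nat_subset_range (σ ∪ τ)
  exact hZ.integral_prod_mul_prod_of_subset_range n (union_subset_left hn)
    (union_subset_right hn)
end
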